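/- arXiv:2311.13870 — 2 statements merged into one kernel-verified Lean document; each statement's English description precedes it below -/
import Mathlib

section
/- Let S and A be finite sets with |A| ≥ 2, T : S × A × S → ℝ, γ ∈ ℝ, and r, Q : S × A → ℝ satisfying the Bellman optimality equation Q(s,a) = r(s,a) + γ · Σ_{s' ∈ S} T(s,a,s') · max_{a' ∈ A} Q(s',a'). Let π(s,a) = exp(Q(s,a)) / Σ_{b ∈ A} exp(Q(s,b)) and η_s^a := log(π(s,a)) − γ · Σ_{s' ∈ S} T(s,a,s') · max_{a' ∈ A} Q(s',a'). Then for every s ∈ S and a ∈ A, r(s,a) = η_s^a + (1/(|A| − 1)) · Σ_{b ∈ A, b ≠ a} ( r(s,b) − η_s^b ). -/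
/-- Equation (3) of the paper: under the Bellman optimality equation and the Boltzmann
policy, the immediate reward of action `a` at state `s` can be expressed through the
rewards of the other actions:
`r s a = η s a + (1/(|A| - 1)) * ∑_{b ≠ a} (r s b - η s b)`. -/
theorem reward_from_other_actions {S A : Type*}
    [Fintype S] [Fintype A] [DecidableEq A] (hA : 2 ≤ Fintype.card A)
    (T : S → A → S → ℝ) (γ : ℝ) (r Q : S → A → ℝ)
    (hQ : ∀ s a, Q s a = r s a + γ * ∑ s', T s a s' * ⨆ a', Q s' a')
    (π : S → A → ℝ)
    (hπ : ∀ s a, π s a = Real.exp (Q s a) / ∑ b, Real.exp (Q s b))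
    (η : S → A → ℝ)
    (hη : ∀ s a, η s a = Real.log (π s a) - γ * ∑ s', T s a s' * ⨆ a', Q s' a') :
    ∀ (s : S) (a : A),
      r s a = η s a + (1 / ((Fintype.card A : ℝ) - 1)) *
        ∑ b ∈ Finset.univ.filter (fun b => b ≠ a), (r s b - η s b) := by
  intro s a
  have hcard : Nonempty A := Fintype.card_pos_iff.mp (by omega)
  have hsum_pos : 0 < ∑ b, Real.exp (Q s b) :=
    Finset.sum_pos (fun b _ => Real.exp_pos _) Finset.univ_nonempty
  -- key: r s b - η s b = log (∑ c, exp (Q s c)) for all b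
  have key : ∀ b, r s b - η s b = Real.log (∑ c, Real.exp (Q s c)) := by
    intro b
    have hlog : Real.log (π s b) = Q s b - Real.log (∑ c, Real.exp (Q s c)) := by
      rw [hπ, Real.log_div (Real.exp_ne_zero _) hsum_pos.ne', Real.log_exp]
    have hr : r s b = Q s b - γ * ∑ s', T s b s' * ⨆ a', Q s' a' := by
      have := hQ s b; linarith
    rw [hr, hη, hlog]; ring
  set L := Real.log (∑ c, Real.exp (Q s c)) with hL
  have hfc : (Finset.univ.filter (fun b => b ≠ a)).card = Fintype.card A - 1 := by
    rw [Finset.filter_ne', Finset.card_erase_of_mem (Finset.mem_univ a), Finset.card_univ]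
  have hsum : ∑ b ∈ Finset.univ.filter (fun b => b ≠ a), (r s b - η s b)
      = ((Fintype.card A : ℝ) - 1) * L := by
    rw [Finset.sum_congr rfl (fun b _ => key b), Finset.sum_const, hfc, nsmul_eq_mul]
    have : ((Fintype.card A - 1 : ℕ) : ℝ) = (Fintype.card A : ℝ) - 1 := by
      have : 1 ≤ Fintype.card A := by omega
      push_cast [this]; ring
    rw [this]
  have hne : ((Fintype.card A : ℝ) - 1) ≠ 0 := by
    have : (2 : ℝ) ≤ Fintype.card A := by exact_mod_cast hA
    linarith
  rw [hsum]
  have : (1 / ((Fintype.card A : ℝ) - 1)) * (((Fintype.card A : ℝ) - 1) * L) = L := by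
    field_simp
  rw [this]
  have := key a
  linarith
end

section
/- Let N, K be positive natural numbers, Π : Fin K → ℝ, Λ : Fin K → Fin K → ℝ, p : Fin (N+1) → Fin K → ℝ. Define the path weight W(y) := Π(y(0)) · p(0, y(0)) · Π_{j=1}^{N} ( Λ(y(j−1), y(j)) · p(j, y(j)) ) for y : Fin (N+1) → Fin K, and define α, β by the forward recursion α(0,k) = Π(k)·p(0,k), α(i+1,k) = (Σ_j α(i,j)·Λ(j,k))·p(i+1,k) and backward recursion β(N,k) = 1, β(i,k) = Σ_j Λ(k,j)·p(i+1,j)·β(i+1,j). Then for every i ≤ N and k ∈ Fin K, α(i,k) · β(i,k) = Σ_{y : Fin (N+1) → Fin K, y(i) = k} W(y). -/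
/-!
At position `i` the path weight `W y` splits as a prefix weight, which only sees `y` on `[0, i]`,
times a suffix weight, which only sees `y` on `[i, N]`. Hence the sum over paths with `y i = k`
factors into a sum over prefixes ending in `k` times a sum over suffixes starting in `k`. By
induction on `i`, the prefix sums obey the forward recursion defining `α` and the suffix sums the
backward recursion defining `β`.
-/

open Finset

namespace ForwardBackward

section ConstOutside

variable {ι σ R : Type*} [Fintype ι] [DecidableEq ι] [Fintype σ] [DecidableEq σ]
  [CommSemiring R]

/-- Functions on a block `S` of coordinates, encoded as total functions frozen to `k` off `S`;
this avoids dependent types such as `Fin (i + 1) → σ` for prefixes. -/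
def constOutside (S : Finset ι) (k : σ) : Finset (ι → σ) :=
  univ.filter fun y => ∀ c ∉ S, y c = k

@[simp]
lemma mem_constOutside {S : Finset ι} {k : σ} {y : ι → σ} :
    y ∈ constOutside S k ↔ ∀ c ∉ S, y c = k := by
  simp [constOutside]

lemma sum_constOutside_eq_of_dependsOn {S : Finset ι} {f : (ι → σ) → R}
    (hf : DependsOn f S) (k l : σ) :
    ∑ y ∈ constOutside S k, f y = ∑ y ∈ constOutside S l, f y :=
  sum_nbij' (fun y => S.piecewise y fun _ => l) (fun y => S.piecewise y fun _ => k)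
    (by intro y _; simp +contextual [piecewise])
    (by intro y _; simp +contextual [piecewise])
    (by intro y hy; funext c; by_cases hc : c ∈ S <;> simp_all [piecewise])
    (by intro y hy; funext c; by_cases hc : c ∈ S <;> simp_all [piecewise])
    (fun y _ => hf fun c hc => by simp [piecewise, mem_coe.mp hc])

lemma sum_constOutside_insert_filter {S : Finset ι} {c : ι} (hc : c ∉ S)
    {f : (ι → σ) → R} (hf : DependsOn f (insert c S : Finset ι)) (k l : σ) :
    ∑ y ∈ (constOutside (insert c S) k).filter (fun y => y c = l), f y
      = ∑ y ∈ constOutside S l, f y := by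
  have hfiber : (constOutside (insert c S) l).filter (fun y => y c = l) = constOutside S l := by
    ext y
    simp only [mem_filter, mem_constOutside, mem_insert, not_or]
    exact ⟨fun ⟨h, hl⟩ d hd => if hdc : d = c then hdc ▸ hl else h d ⟨hdc, hd⟩,
      fun h => ⟨fun d hd => h d hd.2, h c hc⟩⟩
  have hg : DependsOn (fun y => if y c = l then f y else 0) (insert c S : Finset ι) :=
    fun y z h => by
      simp only [h c (by simp), hf h]
  rw [sum_filter, sum_constOutside_eq_of_dependsOn hg k l, ← sum_filter, hfiber]

lemma sum_constOutside_union_mul {A B : Finset ι} (hAB : Disjoint A B) {f g : (ι → σ) → R}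
    (hf : DependsOn f (↑B)ᶜ) (hg : DependsOn g (↑A)ᶜ) (k : σ) :
    ∑ y ∈ constOutside (A ∪ B) k, f y * g y
      = (∑ u ∈ constOutside A k, f u) * ∑ v ∈ constOutside B k, g v := by
  rw [sum_mul_sum, ← sum_product']
  have hnotB : ∀ c ∈ A, c ∉ B := fun c hcA hcB => disjoint_left.mp hAB hcA hcB
  refine sum_nbij' (fun y => (A.piecewise y fun _ => k, B.piecewise y fun _ => k))
    (fun uv => A.piecewise uv.1 uv.2) ?_ ?_ ?_ ?_ ?_
  · intro y _; simp +contextual [piecewise]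
  · rintro ⟨u, v⟩ huv
    simp only [mem_product, mem_constOutside] at huv
    simp +contextual [piecewise, huv.2]
  · intro y hy
    simp only [mem_constOutside, mem_union, not_or] at hy
    funext c; by_cases hcA : c ∈ A <;> by_cases hcB : c ∈ B <;> simp_all [piecewise]
  · rintro ⟨u, v⟩ huv
    simp only [mem_product, mem_constOutside] at huv
    ext c
    · by_cases hcA : c ∈ A <;> simp_all [piecewise]
    · by_cases hcA : c ∈ A <;> simp_all [piecewise]
  · intro y hy
    simp only [mem_constOutside, mem_union, not_or] at hy
    congr 1
    · exact hf fun c hc => by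
        by_cases hcA : c ∈ A <;> simp_all [piecewise]
    · exact hg fun c hc => by
        by_cases hcB : c ∈ B <;> simp_all [piecewise]

lemma constOutside_empty (k : σ) : constOutside (∅ : Finset ι) k = {fun _ => k} := by
  ext y
  simp [funext_iff]

lemma constOutside_Iio_union_Ioi [LinearOrder ι] [LocallyFiniteOrderBot ι]
    [LocallyFiniteOrderTop ι] (i : ι) (k : σ) :
    constOutside (Iio i ∪ Ioi i) k = univ.filter fun y => y i = k := by
  ext y
  simp only [mem_constOutside, mem_union, mem_Iio, mem_Ioi, not_or, not_lt, mem_filter,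
    mem_univ, true_and]
  exact ⟨fun h => h i ⟨le_rfl, le_rfl⟩, fun h c hc => le_antisymm hc.2 hc.1 ▸ h⟩

end ConstOutside

section Chain

variable {σ R : Type*} [CommSemiring R] {N : ℕ} (a : σ → R) (T : Fin N → σ → σ → R)

def prefixWeight (i : Fin (N + 1)) (y : Fin (N + 1) → σ) : R :=
  a (y 0) * ∏ j ∈ univ.filter (fun j : Fin N => j.castSucc < i), T j (y j.castSucc) (y j.succ)

def suffixWeight (i : Fin (N + 1)) (y : Fin (N + 1) → σ) : R :=
  ∏ j ∈ univ.filter (fun j : Fin N => i ≤ j.castSucc), T j (y j.castSucc) (y j.succ)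

lemma prefixWeight_mul_suffixWeight (i : Fin (N + 1)) (y : Fin (N + 1) → σ) :
    prefixWeight a T i y * suffixWeight T i y
      = a (y 0) * ∏ j, T j (y j.castSucc) (y j.succ) := by
  simp only [prefixWeight, suffixWeight, ← not_lt]
  rw [mul_assoc, prod_filter_mul_prod_filter_not]

lemma dependsOn_prefixWeight (i : Fin (N + 1)) :
    DependsOn (prefixWeight a T i) (Set.Iic i) := by
  intro y z h
  simp only [Set.mem_Iic] at h
  rw [prefixWeight, prefixWeight, h 0 (Fin.zero_le i)]
  refine congrArg _ (prod_congr rfl fun j hj => ?_)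
  have hj : j.castSucc < i := (mem_filter.mp hj).2
  rw [h _ hj.le, h _ (Fin.castSucc_lt_iff_succ_le.mp hj)]

lemma dependsOn_suffixWeight (i : Fin (N + 1)) :
    DependsOn (suffixWeight T i) (Set.Ici i) := by
  intro y z h
  simp only [Set.mem_Ici] at h
  refine prod_congr rfl fun j hj => ?_
  have hj : i ≤ j.castSucc := (mem_filter.mp hj).2
  rw [h _ hj, h _ (hj.trans (Fin.castSucc_le_succ j))]

lemma prefixWeight_zero (y : Fin (N + 1) → σ) : prefixWeight a T 0 y = a (y 0) := by
  simp [prefixWeight]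

lemma prefixWeight_succ (i : Fin N) (y : Fin (N + 1) → σ) :
    prefixWeight a T i.succ y
      = prefixWeight a T i.castSucc y * T i (y i.castSucc) (y i.succ) := by
  have hfilter : univ.filter (fun j : Fin N => j.castSucc < i.succ)
      = insert i (univ.filter fun j : Fin N => j.castSucc < i.castSucc) := by
    ext j
    simp only [mem_filter, mem_univ, true_and, mem_insert, Fin.castSucc_lt_castSucc_iff,
      Fin.castSucc_lt_succ_iff]
    rw [le_iff_eq_or_lt]
  rw [prefixWeight, prefixWeight, hfilter, prod_insert (by simp), mul_comm (T i _ _), mul_assoc]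

lemma suffixWeight_last (y : Fin (N + 1) → σ) : suffixWeight T (Fin.last N) y = 1 := by
  rw [suffixWeight, filter_false_of_mem fun j _ => not_le.mpr (Fin.castSucc_lt_last j), prod_empty]

lemma suffixWeight_castSucc (i : Fin N) (y : Fin (N + 1) → σ) :
    suffixWeight T i.castSucc y = T i (y i.castSucc) (y i.succ) * suffixWeight T i.succ y := by
  have hfilter : univ.filter (fun j : Fin N => i.castSucc ≤ j.castSucc)
      = insert i (univ.filter fun j : Fin N => i.succ ≤ j.castSucc) := by
    ext j
    simp only [mem_filter, mem_univ, true_and, mem_insert, Fin.castSucc_le_castSucc_iff,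
      Fin.succ_le_castSucc_iff]
    rw [le_iff_eq_or_lt, eq_comm]
  rw [suffixWeight, suffixWeight, hfilter, prod_insert (by simp [Fin.le_def])]

end Chain

section Recursions

variable {σ R : Type*} [Fintype σ] [DecidableEq σ] [CommSemiring R] {N : ℕ}
  (a : σ → R) (T : Fin N → σ → σ → R)

lemma eq_sum_constOutside_prefixWeight {α : Fin (N + 1) → σ → R}
    (hα0 : ∀ k, α 0 k = a k)
    (hα : ∀ (i : Fin N) (k : σ), α i.succ k = ∑ j, α i.castSucc j * T i j k)
    (i : Fin (N + 1)) (k : σ) :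
    α i k = ∑ y ∈ constOutside (Iio i) k, prefixWeight a T i y := by
  induction i using Fin.induction generalizing k with
  | zero =>
    rw [show Iio (0 : Fin (N + 1)) = ∅ by ext; simp, constOutside_empty, sum_singleton,
      prefixWeight_zero, hα0]
  | succ i ih =>
    set c := i.castSucc
    have hIio : Iio i.succ = insert c (Iio c) := by
      rw [Iio_insert]
      ext j
      simp [c, Fin.le_castSucc_iff]
    have hdep : DependsOn (prefixWeight a T c) ↑(insert c (Iio c)) := by
      rw [Iio_insert, coe_Iic]
      exact dependsOn_prefixWeight a T c
    calc α i.succ k = ∑ l, α c l * T i l k := hα i k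
      _ = ∑ l, ∑ y ∈ (constOutside (insert c (Iio c)) k).filter (fun y => y c = l),
            prefixWeight a T c y * T i l k := by
        simp_rw [← sum_mul, sum_constOutside_insert_filter notMem_Iio_self hdep, ih]
      _ = ∑ y ∈ constOutside (Iio i.succ) k, prefixWeight a T i.succ y := by
        rw [hIio, ← sum_fiberwise _ fun y : Fin (N + 1) → σ => y c]
        refine sum_congr rfl fun l _ => sum_congr rfl fun y hy => ?_
        obtain ⟨hyk, hyl⟩ := mem_filter.mp hy
        rw [prefixWeight_succ, mem_constOutside.mp hyk i.succ (by simp [c]), ← hyl]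

lemma eq_sum_constOutside_suffixWeight {β : Fin (N + 1) → σ → R}
    (hβN : ∀ k, β (Fin.last N) k = 1)
    (hβ : ∀ (i : Fin N) (k : σ), β i.castSucc k = ∑ j, T i k j * β i.succ j)
    (i : Fin (N + 1)) (k : σ) :
    β i k = ∑ y ∈ constOutside (Ioi i) k, suffixWeight T i y := by
  induction i using Fin.reverseInduction generalizing k with
  | last =>
    rw [show Ioi (Fin.last N) = ∅ by ext; simp [Fin.le_last], constOutside_empty, sum_singleton,
      suffixWeight_last, hβN]
  | cast i ih =>
    set c := i.succ
    have hIoi : Ioi i.castSucc = insert c (Ioi c) := by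
      rw [Ioi_insert]
      ext j
      simp [c, Fin.castSucc_lt_iff_succ_le]
    have hdep : DependsOn (suffixWeight T c) ↑(insert c (Ioi c)) := by
      rw [Ioi_insert, coe_Ici]
      exact dependsOn_suffixWeight T c
    calc β i.castSucc k = ∑ l, T i k l * β c l := hβ i k
      _ = ∑ l, ∑ y ∈ (constOutside (insert c (Ioi c)) k).filter (fun y => y c = l),
            T i k l * suffixWeight T c y := by
        simp_rw [← mul_sum, sum_constOutside_insert_filter notMem_Ioi_self hdep, ih]
      _ = ∑ y ∈ constOutside (Ioi i.castSucc) k, suffixWeight T i.castSucc y := by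
        rw [hIoi, ← sum_fiberwise _ fun y : Fin (N + 1) → σ => y c]
        refine sum_congr rfl fun l _ => sum_congr rfl fun y hy => ?_
        obtain ⟨hyk, hyl⟩ := mem_filter.mp hy
        rw [suffixWeight_castSucc, mem_constOutside.mp hyk i.castSucc (by simp [c]), ← hyl]

end Recursions

end ForwardBackward

open ForwardBackward in
theorem forward_backward_product_path_sum_general (N K : ℕ)
    (Pi0 : Fin K → ℝ) (Lam : Fin K → Fin K → ℝ) (p : Fin (N + 1) → Fin K → ℝ)
    (W : (Fin (N + 1) → Fin K) → ℝ)
    (hW : ∀ y, W y = Pi0 (y 0) * p 0 (y 0)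
      * ∏ j : Fin N, (Lam (y j.castSucc) (y j.succ) * p j.succ (y j.succ)))
    (α : Fin (N + 1) → Fin K → ℝ)
    (hα0 : ∀ k, α 0 k = Pi0 k * p 0 k)
    (hα : ∀ (i : Fin N) (k : Fin K),
      α i.succ k = (∑ j, α i.castSucc j * Lam j k) * p i.succ k)
    (β : Fin (N + 1) → Fin K → ℝ)
    (hβN : ∀ k, β (Fin.last N) k = 1)
    (hβ : ∀ (i : Fin N) (k : Fin K),
      β i.castSucc k = ∑ j, Lam k j * p i.succ j * β i.succ j) :
    ∀ (i : Fin (N + 1)) (k : Fin K),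
      α i k * β i k
        = ∑ y ∈ Finset.univ.filter (fun y : Fin (N + 1) → Fin K => y i = k), W y := by
  intro i k
  let a : Fin K → ℝ := fun k => Pi0 k * p 0 k
  let T : Fin N → Fin K → Fin K → ℝ := fun j k l => Lam k l * p j.succ l
  have hαT (i : Fin N) (k : Fin K) : α i.succ k = ∑ j, α i.castSucc j * T i j k := by
    simp only [hα, sum_mul, T, mul_assoc]
  have hprefix : DependsOn (prefixWeight a T i) (↑(Ioi i))ᶜ :=
    (dependsOn_prefixWeight a T i).mono fun c => by simp
  have hsuffix : DependsOn (suffixWeight T i) (↑(Iio i))ᶜ :=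
    (dependsOn_suffixWeight T i).mono fun c => by simp
  rw [eq_sum_constOutside_prefixWeight a T hα0 hαT, eq_sum_constOutside_suffixWeight T hβN hβ,
    ← sum_constOutside_union_mul (disjoint_Ioi_Iio i).symm hprefix hsuffix,
    constOutside_Iio_union_Ioi]
  exact sum_congr rfl fun y _ => by rw [prefixWeight_mul_suffixWeight, hW]

/-- Equation (B.3) of the paper (numerator): the product of forward and backward
variables equals the total weight of all latent-state paths `y` with `y i = k`. -/
theorem forward_backward_product_path_sum (N K : ℕ) (hN : 0 < N) (hK : 0 < K)
    (Pi0 : Fin K → ℝ) (Lam : Fin K → Fin K → ℝ) (p : Fin (N + 1) → Fin K → ℝ)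
    (W : (Fin (N + 1) → Fin K) → ℝ)
    (hW : ∀ y, W y = Pi0 (y 0) * p 0 (y 0)
      * ∏ j : Fin N, (Lam (y j.castSucc) (y j.succ) * p j.succ (y j.succ)))
    (α : Fin (N + 1) → Fin K → ℝ)
    (hα0 : ∀ k, α 0 k = Pi0 k * p 0 k)
    (hα : ∀ (i : Fin N) (k : Fin K),
      α i.succ k = (∑ j, α i.castSucc j * Lam j k) * p i.succ k)
    (β : Fin (N + 1) → Fin K → ℝ)
    (hβN : ∀ k, β (Fin.last N) k = 1)
    (hβ : ∀ (i : Fin N) (k : Fin K),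
      β i.castSucc k = ∑ j, Lam k j * p i.succ j * β i.succ j) :
    ∀ (i : Fin (N + 1)) (k : Fin K),
      α i k * β i k
        = ∑ y ∈ Finset.univ.filter (fun y : Fin (N + 1) → Fin K => y i = k), W y :=
  forward_backward_product_path_sum_general N K Pi0 Lam p W hW α hα0 hα β hβN hβ
end
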